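/- arXiv:1003.4353 — 4 statements merged into one kernel-verified Lean document; each statement's English description precedes it below -/
import Mathlib

section
/- Let A and A' be two top-down complete TDSTAs (or two bottom-up complete BDSTAs) over the same alphabet Σ. Then A ≡ A' if and only if L(Â) = L(Â'), where Â and Â' are the recognizers over Σ ∪ Σ̂ associated with A and A'. -/
/-- Binary trees over an alphabet `σ`: `leaf` is the leaf symbol `#`. -/
inductive BTree (σ : Type) : Type where
  | leaf : BTree σ
  | node : σ → BTree σ → BTree σ → BTree σ

namespace BTree

/-- `mem π t` : the node `π` (a sequence over `{1,2}`, here `Bool` with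
`false` = first child, `true` = second child) belongs to `dom t`. -/
def mem {σ : Type} : List Bool → BTree σ → Prop
  | [], _ => True
  | _ :: _, .leaf => False
  | false :: π, .node _ t1 _ => mem π t1
  | true :: π, .node _ _ t2 => mem π t2

/-- The label of `t` at node `π`: `some l` if `t(π) = l ∈ σ`,
and `none` if `t(π) = #` or `π ∉ dom t`. -/
def labelAt {σ : Type} : BTree σ → List Bool → Option σ
  | .leaf, _ => none
  | .node l _ _, [] => some l
  | .node _ t1 _, false :: π => labelAt t1 π
  | .node _ _ t2, true :: π => labelAt t2 π

end BTree

/-- A selecting tree automaton (STA) over alphabet `σ` with states `Q`: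
top states, bottom states, selecting configurations and transitions
`(q, L, q₁, q₂)` with `L ⊆ σ`. -/
structure STA (σ Q : Type) where
  top : Set Q
  bot : Set Q
  sel : Set (Q × σ)
  delta : Set (Q × Set σ × Q × Q)

namespace STA

variable {σ Q : Type}

/-- Destination states: `δ(q,l) = {(q',q'') | ∃ L, l ∈ L ∧ (q,L,q',q'') ∈ δ}`. -/
def dst (A : STA σ Q) (q : Q) (l : σ) : Set (Q × Q) :=
  {p | ∃ L, l ∈ L ∧ (q, L, p.1, p.2) ∈ A.delta}

/-- Source states: `δ(q₁,q₂,l) = {q | ∃ L, l ∈ L ∧ (q,L,q₁,q₂) ∈ δ}`. -/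
def src (A : STA σ Q) (q1 q2 : Q) (l : σ) : Set Q :=
  {q | ∃ L, l ∈ L ∧ (q, L, q1, q2) ∈ A.delta}

/-- `R` is a run of `A` over `t`. -/
def IsRun (A : STA σ Q) (t : BTree σ) (R : List Bool → Q) : Prop :=
  ∀ π l, t.labelAt π = some l →
    R π ∈ A.src (R (π ++ [false])) (R (π ++ [true])) l

/-- `R` is an accepting run of `A` over `t`. -/
def Accepting (A : STA σ Q) (t : BTree σ) (R : List Bool → Q) : Prop :=
  A.IsRun t R ∧ R [] ∈ A.top ∧
    ∀ π, BTree.mem π t → t.labelAt π = none → R π ∈ A.bot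

/-- The language of `A`. -/
def lang (A : STA σ Q) : Set (BTree σ) := {t | ∃ R, A.Accepting t R}

/-- The set of nodes of `t` selected by `A`. -/
def selected (A : STA σ Q) (t : BTree σ) : Set (List Bool) :=
  {π | ∃ R l, A.Accepting t R ∧ t.labelAt π = some l ∧ (R π, l) ∈ A.sel}

/-- `A` is top-down deterministic. -/
def TDDet (A : STA σ Q) : Prop :=
  (∃ q, A.top = {q}) ∧ ∀ q l, ∃ p, A.dst q l = {p}

/-- `A` is bottom-up deterministic. -/
def BUDet (A : STA σ Q) : Prop :=
  (∃ q, A.bot = {q}) ∧ ∀ q1 q2 l, ∃ q, A.src q1 q2 l = {q}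

/-- `A` is top-down complete. -/
def TDComplete (A : STA σ Q) : Prop := ∀ q l, (A.dst q l).Nonempty

/-- `A` is bottom-up complete. -/
def BUComplete (A : STA σ Q) : Prop := ∀ q1 q2 l, (A.src q1 q2 l).Nonempty

/-- One-step reachability between states. -/
def step (A : STA σ Q) (p p' : Q) : Prop :=
  ∃ L q1 q2, (p, L, q1, q2) ∈ A.delta ∧ (p' = q1 ∨ p' = q2)

/-- Reachability between states. -/
def reach (A : STA σ Q) : Q → Q → Prop := Relation.ReflTransGen A.step

/-- `A[q]` : the restriction of `A` to the state `q`
(top states become `{q}` and everything is restricted to states reachable from `q`). -/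
def restrict (A : STA σ Q) (q : Q) : STA σ Q where
  top := {q}
  bot := {p | p ∈ A.bot ∧ A.reach q p}
  sel := {ps | ps ∈ A.sel ∧ A.reach q ps.1}
  delta := {tr | tr ∈ A.delta ∧ A.reach q tr.1}

/-- A state is non-changing if `δ(q,l) = {(q,q)}` for every label. -/
def NonChanging (A : STA σ Q) (q : Q) : Prop := ∀ l, A.dst q l = {(q, q)}

/-- Top-down universal state. -/
def TDUniversal (A : STA σ Q) (q : Q) : Prop := A.NonChanging q ∧ q ∈ A.bot

/-- Top-down sink state. -/
def TDSink (A : STA σ Q) (q : Q) : Prop := A.NonChanging q ∧ q ∉ A.bot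

end STA

/-- Equivalence of STAs: same language and same selected nodes on every tree. -/
def STAEquiv {σ Q Q' : Type} (A : STA σ Q) (B : STA σ Q') : Prop :=
  A.lang = B.lang ∧ ∀ t, A.selected t = B.selected t

/-- `A` is a minimal top-down complete TDSTA: no equivalent top-down complete
TDSTA has strictly fewer states. -/
def MinimalTD {σ Q : Type} (A : STA σ Q) : Prop :=
  A.TDDet ∧ A.TDComplete ∧
    ∀ (Q' : Type) [Finite Q'], ∀ B : STA σ Q',
      B.TDDet → B.TDComplete → STAEquiv B A → Nat.card Q ≤ Nat.card Q'

/-- `A` is a minimal bottom-up complete BDSTA. -/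
def MinimalBU {σ Q : Type} (A : STA σ Q) : Prop :=
  A.BUDet ∧ A.BUComplete ∧
    ∀ (Q' : Type) [Finite Q'], ∀ B : STA σ Q',
      B.BUDet → B.BUComplete → STAEquiv B A → Nat.card Q ≤ Nat.card Q'

/-- `B` behaves like `A_⊤`: it accepts every tree and selects no node. -/
def IsTopSTA {σ Q : Type} (B : STA σ Q) : Prop :=
  B.lang = Set.univ ∧ ∀ t, B.selected t = ∅

namespace STA

variable {σ Q : Type}

/-- The transitions of the recognizer `Â` obtained by splitting each transition
`(q,L,q₁,q₂)` of `A` into its non-selecting part (labels kept in `Σ`,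
i.e. `Sum.inl`) and its selecting part (labels hatted into `Σ̂`, i.e. `Sum.inr`),
omitting empty label sets. -/
def hatBase (A : STA σ Q) :
    Set ((Q ⊕ Unit) × Set (σ ⊕ σ) × (Q ⊕ Unit) × (Q ⊕ Unit)) :=
  {tr | ∃ q L q1 q2, (q, L, q1, q2) ∈ A.delta ∧
    ((tr = (Sum.inl q, {x | ∃ l ∈ L, (q, l) ∉ A.sel ∧ x = Sum.inl l},
            Sum.inl q1, Sum.inl q2) ∧ ∃ l ∈ L, (q, l) ∉ A.sel) ∨
     (tr = (Sum.inl q, {x | ∃ l ∈ L, (q, l) ∈ A.sel ∧ x = Sum.inr l},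
            Sum.inl q1, Sum.inl q2) ∧ ∃ l ∈ L, (q, l) ∈ A.sel))}

/-- `L(q)` : the labels for which the state `q` has no transition so far. -/
def hatMissing (A : STA σ Q) (q : Q ⊕ Unit) : Set (σ ⊕ σ) :=
  {x | ¬ ∃ L q1 q2, x ∈ L ∧ (q, L, q1, q2) ∈ A.hatBase}

/-- The recognizer `Â` over `Σ ∪ Σ̂` associated with `A`
(`Sum.inl l` encodes `l ∈ Σ`, `Sum.inr l` encodes `l̂ ∈ Σ̂`;
the fresh sink state `q⊥` is `Sum.inr ()`). -/
def hat (A : STA σ Q) : STA (σ ⊕ σ) (Q ⊕ Unit) where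
  top := Sum.inl '' A.top
  bot := Sum.inl '' A.bot
  sel := ∅
  delta := A.hatBase ∪
    {tr | ∃ q : Q ⊕ Unit, (A.hatMissing q).Nonempty ∧
      tr = (q, A.hatMissing q, Sum.inr (), Sum.inr ())} ∪
    {(Sum.inr (), (Set.univ : Set (σ ⊕ σ)), Sum.inr (), Sum.inr ())}

end STA

/-- Root relabeling of a tree. -/
def relabelRoot {σ : Type} (t : BTree σ) (l : σ) : BTree σ :=
  match t with
  | .leaf => .leaf
  | .node _ t1 t2 => .node l t1 t2

/-- A recognizer `B` over `Σ ∪ Σ̂` is selecting-unambiguous. -/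
def SelUnambiguous {σ Q : Type} (B : STA (σ ⊕ σ) Q) : Prop :=
  ∀ q : Q, ∀ t ∈ (B.restrict q).lang,
    (∀ s : σ, t.labelAt [] = some (Sum.inl s) →
      relabelRoot t (Sum.inr s) ∉ (B.restrict q).lang) ∧
    (∀ s : σ, t.labelAt [] = some (Sum.inr s) →
      relabelRoot t (Sum.inl s) ∉ (B.restrict q).lang)

/-! For a deterministic STA, two accepting runs on a tree agree on all of its nodes: top-down
determinism propagates agreement from the root, bottom-up determinism from the leaves. A tree
over `Σ ∪ Σ̂` is accepted by `Â` exactly when it arises from some accepting run `R` of `A` on a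
tree `t` by hatting the labels at the nodes where `R` is in a selecting configuration (the sink
`q⊥` cannot occur in an accepting run, since it only leads to itself and is not a bottom state).
So `L(Â)` records, for each `t ∈ L(A)` and each accepting run on `t`, which nodes that run
selects. Comparing these encodings for `A` and `A'` gives both directions, uniqueness of runs
being needed only to pass from "selected by some run" to "selected by the run at hand". -/

namespace BTree

variable {σ τ : Type}

theorem mem_nil {t : BTree σ} : t.mem [] := by cases t <;> trivial

theorem mem_of_labelAt_eq_some {t : BTree σ} {π : List Bool} {l : σ}
    (h : t.labelAt π = some l) : t.mem π := by
  induction π generalizing t with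
  | nil => exact mem_nil
  | cons b π ih =>
    cases t with
    | leaf => simp [labelAt] at h
    | node l' t1 t2 => cases b <;> exact ih h

theorem mem_append_singleton {t : BTree σ} {π : List Bool} {l : σ}
    (h : t.labelAt π = some l) (b : Bool) : t.mem (π ++ [b]) := by
  induction π generalizing t with
  | nil => cases t with
    | leaf => simp [labelAt] at h
    | node _ t1 t2 => cases b; exacts [mem_nil (t := t1), mem_nil (t := t2)]
  | cons c π ih =>
    cases t with
    | leaf => simp [labelAt] at h
    | node l' t1 t2 => cases c <;> exact ih h

theorem ext_labelAt {t s : BTree σ} (h : ∀ π, t.labelAt π = s.labelAt π) : t = s := by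
  induction t generalizing s with
  | leaf => cases s with
    | leaf => rfl
    | node l _ _ => simpa [labelAt] using h []
  | node l t1 t2 ih1 ih2 => cases s with
    | leaf => simpa [labelAt] using h []
    | node l' s1 s2 =>
      have hl : l = l' := by simpa [labelAt] using h []
      rw [hl, ih1 fun π => h (false :: π), ih2 fun π => h (true :: π)]

-- `f` sees positions relative to the root of the tree being relabelled.
def relabel (f : List Bool → σ → τ) : BTree σ → BTree τ
  | .leaf => .leaf
  | .node l t1 t2 =>
      .node (f [] l) (relabel (fun π => f (false :: π)) t1) (relabel (fun π => f (true :: π)) t2)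

theorem labelAt_relabel (f : List Bool → σ → τ) (t : BTree σ) (π : List Bool) :
    (t.relabel f).labelAt π = (t.labelAt π).map (f π) := by
  induction t generalizing f π with
  | leaf => rfl
  | node l t1 t2 ih1 ih2 =>
    rcases π with _ | ⟨_ | _, π⟩
    · rfl
    · exact ih1 _ π
    · exact ih2 _ π

theorem mem_relabel {f : List Bool → σ → τ} {t : BTree σ} {π : List Bool} :
    (t.relabel f).mem π ↔ t.mem π := by
  induction t generalizing f π with
  | leaf => cases π <;> simp [relabel, mem]
  | node l t1 t2 ih1 ih2 => rcases π with _ | ⟨_ | _, π⟩ <;> simp [relabel, mem, ih1, ih2]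

theorem relabel_eq_relabel_iff {f g : List Bool → σ → τ} {t : BTree σ} :
    t.relabel f = t.relabel g ↔ ∀ π l, t.labelAt π = some l → f π l = g π l := by
  constructor
  · intro h π l hl
    simpa [labelAt_relabel, hl] using congrArg (labelAt · π) h
  · intro h
    refine ext_labelAt fun π => ?_
    rw [labelAt_relabel, labelAt_relabel]
    cases hl : t.labelAt π with
    | none => rfl
    | some l => exact congrArg some (h π l hl)

def proj (t : BTree (σ ⊕ σ)) : BTree σ := t.relabel fun _ => Sum.elim id id

theorem labelAt_proj (t : BTree (σ ⊕ σ)) (π : List Bool) :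
    t.proj.labelAt π = (t.labelAt π).map (Sum.elim id id) :=
  labelAt_relabel _ t π

theorem mem_proj {t : BTree (σ ⊕ σ)} {π : List Bool} : t.proj.mem π ↔ t.mem π := mem_relabel

theorem proj_relabel (f : List Bool → σ → σ ⊕ σ) (hf : ∀ π l, Sum.elim id id (f π l) = l)
    (t : BTree σ) : (t.relabel f).proj = t :=
  ext_labelAt fun π => by
    cases hl : t.labelAt π <;> simp [proj, labelAt_relabel, hl, hf]

end BTree

namespace STA

variable {σ Q Q' : Type}

theorem IsRun.left {A : STA σ Q} {l : σ} {t1 t2 : BTree σ} {R : List Bool → Q}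
    (h : A.IsRun (.node l t1 t2) R) : A.IsRun t1 fun π => R (false :: π) :=
  fun π => h (false :: π)

theorem IsRun.right {A : STA σ Q} {l : σ} {t1 t2 : BTree σ} {R : List Bool → Q}
    (h : A.IsRun (.node l t1 t2) R) : A.IsRun t2 fun π => R (true :: π) :=
  fun π => h (true :: π)

def BotAtLeaves (A : STA σ Q) (t : BTree σ) (R : List Bool → Q) : Prop :=
  ∀ π, t.mem π → t.labelAt π = none → R π ∈ A.bot

theorem BotAtLeaves.left {A : STA σ Q} {l : σ} {t1 t2 : BTree σ} {R : List Bool → Q}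
    (h : A.BotAtLeaves (.node l t1 t2) R) : A.BotAtLeaves t1 fun π => R (false :: π) :=
  fun π => h (false :: π)

theorem BotAtLeaves.right {A : STA σ Q} {l : σ} {t1 t2 : BTree σ} {R : List Bool → Q}
    (h : A.BotAtLeaves (.node l t1 t2) R) : A.BotAtLeaves t2 fun π => R (true :: π) :=
  fun π => h (true :: π)

def HasUniqueRuns (A : STA σ Q) : Prop :=
  ∀ t R R', A.Accepting t R → A.Accepting t R' → ∀ π, t.mem π → R π = R' π

theorem IsRun.eq_of_tdDet {A : STA σ Q} (hδ : ∀ q l, ∃ p, A.dst q l = {p}) {t : BTree σ}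
    {R R' : List Bool → Q} (hR : A.IsRun t R) (hR' : A.IsRun t R') (hroot : R [] = R' []) :
    ∀ π, t.mem π → R π = R' π := by
  induction t generalizing R R' with
  | leaf =>
    rintro (_ | _) hπ
    exacts [hroot, hπ.elim]
  | node l t1 t2 ih1 ih2 =>
    have hchildren : (R [false], R [true]) = (R' [false], R' [true]) := by
      obtain ⟨p, hp⟩ := hδ (R []) l
      have h : (R [false], R [true]) ∈ A.dst (R []) l := hR [] l rfl
      have h' : (R' [false], R' [true]) ∈ A.dst (R []) l := hroot ▸ hR' [] l rfl
      rw [hp] at h h'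
      exact h.trans h'.symm
    rintro (_ | ⟨_ | _, π⟩) hπ
    · exact hroot
    · exact ih1 hR.left hR'.left (congrArg Prod.fst hchildren) π hπ
    · exact ih2 hR.right hR'.right (congrArg Prod.snd hchildren) π hπ

theorem TDDet.hasUniqueRuns {A : STA σ Q} (hA : A.TDDet) : A.HasUniqueRuns := by
  rintro t R R' ⟨hR, hRtop, -⟩ ⟨hR', hR'top, -⟩
  obtain ⟨q, hq⟩ := hA.1
  rw [hq] at hRtop hR'top
  exact hR.eq_of_tdDet hA.2 hR' (hRtop.trans hR'top.symm)

theorem IsRun.eq_of_buDet {A : STA σ Q} (hA : A.BUDet) {t : BTree σ} {R R' : List Bool → Q}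
    (hR : A.IsRun t R) (hR' : A.IsRun t R') (hRbot : A.BotAtLeaves t R)
    (hR'bot : A.BotAtLeaves t R') : ∀ π, t.mem π → R π = R' π := by
  induction t generalizing R R' with
  | leaf =>
    rintro (_ | _) hπ
    · obtain ⟨b, hb⟩ := hA.1
      have h := hRbot [] hπ rfl
      have h' := hR'bot [] hπ rfl
      rw [hb] at h h'
      exact h.trans h'.symm
    · exact hπ.elim
  | node l t1 t2 ih1 ih2 =>
    have e1 := ih1 hR.left hR'.left hRbot.left hR'bot.left
    have e2 := ih2 hR.right hR'.right hRbot.right hR'bot.right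
    rintro (_ | ⟨_ | _, π⟩) hπ
    · obtain ⟨q, hq⟩ := hA.2 (R [false]) (R [true]) l
      have h : R [] ∈ A.src (R [false]) (R [true]) l := hR [] l rfl
      have h' : R' [] ∈ A.src (R [false]) (R [true]) l := by
        rw [e1 [] BTree.mem_nil, e2 [] BTree.mem_nil]
        exact hR' [] l rfl
      rw [hq] at h h'
      exact h.trans h'.symm
    · exact e1 π hπ
    · exact e2 π hπ

theorem BUDet.hasUniqueRuns {A : STA σ Q} (hA : A.BUDet) : A.HasUniqueRuns :=
  fun _ _ _ hR hR' => hR.1.eq_of_buDet hA hR'.1 hR.2.2 hR'.2.2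

theorem mem_selected_iff {A : STA σ Q} (hA : A.HasUniqueRuns) {t : BTree σ}
    {R : List Bool → Q} (hR : A.Accepting t R) {π : List Bool} {l : σ}
    (hl : t.labelAt π = some l) : π ∈ A.selected t ↔ (R π, l) ∈ A.sel := by
  refine ⟨?_, fun hs => ⟨R, l, hR, hl, hs⟩⟩
  rintro ⟨R', l', hR', hl', hs⟩
  obtain rfl : l' = l := Option.some.inj (hl'.symm.trans hl)
  rwa [hA t R' R hR' hR π (BTree.mem_of_labelAt_eq_some hl)] at hs

theorem IsRun.ne_of_absorbing {A : STA σ Q} {q : Q}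
    (hq : ∀ L q1 q2, (q, L, q1, q2) ∈ A.delta → q1 = q ∧ q2 = q) (hqbot : q ∉ A.bot)
    {t : BTree σ} {R : List Bool → Q} (hR : A.IsRun t R) (hRbot : A.BotAtLeaves t R) :
    ∀ π, t.mem π → R π ≠ q := by
  induction t generalizing R with
  | leaf =>
    rintro (_ | _) hπ hRq
    exacts [hqbot (hRq ▸ hRbot [] hπ rfl), hπ]
  | node l t1 t2 ih1 ih2 =>
    rintro (_ | ⟨_ | _, π⟩) hπ hRq
    · obtain ⟨L, -, hL⟩ := hR [] l rfl
      rw [hRq] at hL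
      exact ih1 hR.left hRbot.left [] BTree.mem_nil (hq _ _ _ hL).1
    · exact ih1 hR.left hRbot.left π hπ hRq
    · exact ih2 hR.right hRbot.right π hπ hRq

open Classical in
noncomputable def hatLabel (A : STA σ Q) (q : Q) (l : σ) : σ ⊕ σ :=
  if (q, l) ∈ A.sel then .inr l else .inl l

theorem elim_hatLabel (A : STA σ Q) (q : Q) (l : σ) : Sum.elim id id (A.hatLabel q l) = l := by
  unfold hatLabel; split_ifs <;> rfl

theorem hatLabel_eq_hatLabel_iff {A : STA σ Q} {A' : STA σ Q'} {q : Q} {q' : Q'} {l : σ} :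
    A.hatLabel q l = A'.hatLabel q' l ↔ ((q, l) ∈ A.sel ↔ (q', l) ∈ A'.sel) := by
  unfold hatLabel; split_ifs <;> simp_all

theorem hat_delta_sink {A : STA σ Q} {L : Set (σ ⊕ σ)} {q1 q2 : Q ⊕ Unit}
    (h : (Sum.inr (), L, q1, q2) ∈ A.hat.delta) : q1 = Sum.inr () ∧ q2 = Sum.inr () := by
  rcases h with (⟨_, _, _, _, _, ⟨h, -⟩ | ⟨h, -⟩⟩ | ⟨_, -, h⟩) | h
  · simp at h
  · simp at h
  · simp only [Prod.mk.injEq] at h; exact ⟨h.2.2.1, h.2.2.2⟩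
  · simp only [Set.mem_singleton_iff, Prod.mk.injEq] at h; exact ⟨h.2.2.1, h.2.2.2⟩

theorem inl_mem_hat_src_iff {A : STA σ Q} {q q1 q2 : Q} {x : σ ⊕ σ} :
    Sum.inl q ∈ A.hat.src (.inl q1) (.inl q2) x ↔ ∃ l, x = A.hatLabel q l ∧ q ∈ A.src q1 q2 l := by
  constructor
  · rintro ⟨_, hx, (⟨q', L, q1', q2', hδ, ⟨h, -⟩ | ⟨h, -⟩⟩ | ⟨_, -, h⟩) | h⟩
    · simp only [Prod.mk.injEq, Sum.inl.injEq] at h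
      obtain ⟨rfl, rfl, rfl, rfl⟩ := h
      obtain ⟨l, hl, hs, rfl⟩ := hx
      exact ⟨l, by simp [hatLabel, hs], L, hl, hδ⟩
    · simp only [Prod.mk.injEq, Sum.inl.injEq] at h
      obtain ⟨rfl, rfl, rfl, rfl⟩ := h
      obtain ⟨l, hl, hs, rfl⟩ := hx
      exact ⟨l, by simp [hatLabel, hs], L, hl, hδ⟩
    · simp at h
    · simp at h
  · rintro ⟨l, rfl, L, hl, hδ⟩
    by_cases hs : (q, l) ∈ A.sel
    · refine ⟨{y | ∃ l ∈ L, (q, l) ∈ A.sel ∧ y = .inr l}, ⟨l, hl, hs, by simp [hatLabel, hs]⟩,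
        Or.inl (Or.inl ⟨q, L, q1, q2, hδ, Or.inr ⟨rfl, l, hl, hs⟩⟩)⟩
    · refine ⟨{y | ∃ l ∈ L, (q, l) ∉ A.sel ∧ y = .inl l}, ⟨l, hl, hs, by simp [hatLabel, hs]⟩,
        Or.inl (Or.inl ⟨q, L, q1, q2, hδ, Or.inl ⟨rfl, l, hl, hs⟩⟩)⟩

theorem Accepting.exists_eq_inl_of_hat {A : STA σ Q} {t' : BTree (σ ⊕ σ)}
    {R : List Bool → Q ⊕ Unit} (hR : A.hat.Accepting t' R) :
    ∃ R₀ : List Bool → Q, ∀ π, t'.mem π → R π = .inl (R₀ π) := by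
  obtain ⟨hR, ⟨q₀, -, -⟩, hRbot⟩ := hR
  have hsink := hR.ne_of_absorbing (fun _ _ _ => hat_delta_sink) (by simp [hat]) hRbot
  refine ⟨fun π => (R π).elim id fun _ => q₀, fun π hπ => ?_⟩
  cases h : R π with
  | inl q => simp [h]
  | inr u => exact absurd h (hsink π hπ)

theorem mem_hat_lang_iff {A : STA σ Q} {t' : BTree (σ ⊕ σ)} :
    t' ∈ A.hat.lang ↔
      ∃ t R, A.Accepting t R ∧ t.relabel (fun π => A.hatLabel (R π)) = t' := by
  constructor
  · rintro ⟨R, hacc⟩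
    obtain ⟨R₀, hR₀⟩ := hacc.exists_eq_inl_of_hat
    obtain ⟨hR, hRtop, hRbot⟩ := hacc
    have hstep : ∀ π x, t'.labelAt π = some x →
        ∃ l, x = A.hatLabel (R₀ π) l ∧ R₀ π ∈ A.src (R₀ (π ++ [false])) (R₀ (π ++ [true])) l := by
      intro π x hx
      have h := hR π x hx
      rwa [hR₀ π (BTree.mem_of_labelAt_eq_some hx), hR₀ _ (BTree.mem_append_singleton hx false),
        hR₀ _ (BTree.mem_append_singleton hx true), inl_mem_hat_src_iff] at h
    refine ⟨t'.proj, R₀, ⟨fun π l hl => ?_, ?_, fun π hπ hl => ?_⟩, ?_⟩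
    · rw [BTree.labelAt_proj, Option.map_eq_some_iff] at hl
      obtain ⟨x, hx, rfl⟩ := hl
      obtain ⟨l, rfl, h⟩ := hstep π x hx
      rwa [elim_hatLabel]
    · obtain ⟨q, hq, hRq⟩ := hRtop
      rw [hR₀ [] BTree.mem_nil, Sum.inl.injEq] at hRq
      exact hRq ▸ hq
    · rw [BTree.labelAt_proj, Option.map_eq_none_iff] at hl
      rw [BTree.mem_proj] at hπ
      simpa [hat, hR₀ π hπ] using hRbot π hπ hl
    · refine BTree.ext_labelAt fun π => ?_
      rw [BTree.labelAt_relabel, BTree.labelAt_proj]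
      cases hx : t'.labelAt π with
      | none => rfl
      | some x =>
        obtain ⟨l, rfl, -⟩ := hstep π x hx
        simp [elim_hatLabel]
  · rintro ⟨t, R, ⟨hR, hRtop, hRbot⟩, rfl⟩
    refine ⟨fun π => .inl (R π), fun π x hx => ?_, ⟨R [], hRtop, rfl⟩,
      fun π hπ hl => ⟨R π, hRbot π (BTree.mem_relabel.1 hπ) ?_, rfl⟩⟩
    · rw [BTree.labelAt_relabel, Option.map_eq_some_iff] at hx
      obtain ⟨l, hl, rfl⟩ := hx
      exact inl_mem_hat_src_iff.2 ⟨l, rfl, hR π l hl⟩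
    · simpa [BTree.labelAt_relabel] using hl

theorem relabel_hatLabel_eq_iff {A : STA σ Q} {A' : STA σ Q'} {t : BTree σ}
    {R : List Bool → Q} {R' : List Bool → Q'} :
    t.relabel (fun π => A.hatLabel (R π)) = t.relabel (fun π => A'.hatLabel (R' π)) ↔
      ∀ π l, t.labelAt π = some l → ((R π, l) ∈ A.sel ↔ (R' π, l) ∈ A'.sel) := by
  simp only [BTree.relabel_eq_relabel_iff, hatLabel_eq_hatLabel_iff]

theorem exists_accepting_of_hat_lang_subset {A : STA σ Q} {A' : STA σ Q'}
    (h : A.hat.lang ⊆ A'.hat.lang) {t : BTree σ} {R : List Bool → Q} (hR : A.Accepting t R) :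
    ∃ R', A'.Accepting t R' ∧
      ∀ π l, t.labelAt π = some l → ((R π, l) ∈ A.sel ↔ (R' π, l) ∈ A'.sel) := by
  obtain ⟨t₂, R', hR', heq⟩ := mem_hat_lang_iff.1 (h (mem_hat_lang_iff.2 ⟨t, R, hR, rfl⟩))
  obtain rfl : t₂ = t := by
    simpa only [BTree.proj_relabel _ fun _ => elim_hatLabel _ _] using congrArg BTree.proj heq
  exact ⟨R', hR', relabel_hatLabel_eq_iff.1 heq.symm⟩

theorem lang_subset_of_hat_lang_subset {A : STA σ Q} {A' : STA σ Q'}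
    (h : A.hat.lang ⊆ A'.hat.lang) : A.lang ⊆ A'.lang := fun _ ⟨_, hR⟩ =>
  let ⟨R', hR', _⟩ := exists_accepting_of_hat_lang_subset h hR
  ⟨R', hR'⟩

theorem selected_subset_of_hat_lang_subset {A : STA σ Q} {A' : STA σ Q'}
    (h : A.hat.lang ⊆ A'.hat.lang) (t : BTree σ) : A.selected t ⊆ A'.selected t := by
  rintro π ⟨R, l, hR, hl, hs⟩
  obtain ⟨R', hR', hsel⟩ := exists_accepting_of_hat_lang_subset h hR
  exact ⟨R', l, hR', hl, (hsel π l hl).1 hs⟩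

theorem hat_lang_subset_of_equiv {A : STA σ Q} {A' : STA σ Q'} (hA : A.HasUniqueRuns)
    (hA' : A'.HasUniqueRuns) (e : STAEquiv A A') : A.hat.lang ⊆ A'.hat.lang := by
  intro t' ht'
  obtain ⟨t, R, hR, rfl⟩ := mem_hat_lang_iff.1 ht'
  obtain ⟨R', hR'⟩ : t ∈ A'.lang := e.1 ▸ ⟨R, hR⟩
  refine mem_hat_lang_iff.2 ⟨t, R', hR', relabel_hatLabel_eq_iff.2 fun π l hl => ?_⟩
  rw [← mem_selected_iff hA' hR' hl, ← mem_selected_iff hA hR hl, e.2]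

end STA

theorem stmt5_general {σ Q Q' : Type}
    (A : STA σ Q) (A' : STA σ Q')
    (h : (A.TDDet ∧ A.TDComplete ∧ A'.TDDet ∧ A'.TDComplete) ∨
         (A.BUDet ∧ A.BUComplete ∧ A'.BUDet ∧ A'.BUComplete)) :
    STAEquiv A A' ↔ A.hat.lang = A'.hat.lang := by
  obtain ⟨hA, hA'⟩ : A.HasUniqueRuns ∧ A'.HasUniqueRuns := by
    rcases h with ⟨hA, -, hA', -⟩ | ⟨hA, -, hA', -⟩
    exacts [⟨hA.hasUniqueRuns, hA'.hasUniqueRuns⟩, ⟨hA.hasUniqueRuns, hA'.hasUniqueRuns⟩]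
  constructor
  · intro e
    exact (STA.hat_lang_subset_of_equiv hA hA' e).antisymm
      (STA.hat_lang_subset_of_equiv hA' hA ⟨e.1.symm, fun t => (e.2 t).symm⟩)
  · intro e
    exact ⟨(STA.lang_subset_of_hat_lang_subset e.le).antisymm
        (STA.lang_subset_of_hat_lang_subset e.ge),
      fun t => (STA.selected_subset_of_hat_lang_subset e.le t).antisymm
        (STA.selected_subset_of_hat_lang_subset e.ge t)⟩

/-- two top-down complete TDSTAs (or two bottom-up complete
BDSTAs) are equivalent iff their associated recognizers have the same
language. -/
theorem stmt5 {σ Q Q' : Type} [Finite σ] [Finite Q] [Finite Q']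
    (A : STA σ Q) (A' : STA σ Q')
    (h : (A.TDDet ∧ A.TDComplete ∧ A'.TDDet ∧ A'.TDComplete) ∨
         (A.BUDet ∧ A.BUComplete ∧ A'.BUDet ∧ A'.BUComplete)) :
    STAEquiv A A' ↔ A.hat.lang = A'.hat.lang :=
  stmt5_general A A' h
end

section
/- If A is a top-down complete TDSTA or a bottom-up complete BDSTA over Σ, then its associated recognizer Â over Σ ∪ Σ̂ is selecting-unambiguous. -/
namespace STA

variable {σ Q : Type}

/-- Shifting a run to the left subtree. -/
lemma isRun_left {σ' Q' : Type} (B : STA σ' Q') {x : σ'} {t1 t2 : BTree σ'}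
    {R : List Bool → Q'} (h : B.IsRun (.node x t1 t2) R) :
    B.IsRun t1 (fun π => R (false :: π)) :=
  fun π l hl => h (false :: π) l hl

/-- Every transition of the recognizer whose left state is the sink `q⊥`
has both children equal to `q⊥`. -/
lemma sink_delta (A : STA σ Q) {L : Set (σ ⊕ σ)} {q1 q2 : Q ⊕ Unit}
    (h : ((Sum.inr () : Q ⊕ Unit), L, q1, q2) ∈ A.hat.delta) :
    q1 = Sum.inr () ∧ q2 = Sum.inr () := by
  rcases h with (h | h) | h
  · rcases h with ⟨q, L', q1', q2', _, (⟨heq, _⟩ | ⟨heq, _⟩)⟩ <;>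
      simp [Prod.ext_iff] at heq
  · rcases h with ⟨q', _, heq⟩
    simp [Prod.ext_iff] at heq
    exact ⟨heq.2.2.1, heq.2.2.2⟩
  · simp only [Set.mem_singleton_iff, Prod.ext_iff] at h
    exact ⟨h.2.2.1, h.2.2.2⟩

/-- No tree admits a run (with correct leaf behaviour) of the restricted
recognizer that assigns the sink state to the root. -/
lemma no_sink_run (A : STA σ Q) (q0 : Q ⊕ Unit) :
    ∀ (t : BTree (σ ⊕ σ)) (R : List Bool → Q ⊕ Unit),
      (A.hat.restrict q0).IsRun t R →
      (∀ π, BTree.mem π t → t.labelAt π = none →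
        R π ∈ (A.hat.restrict q0).bot) →
      R [] ≠ Sum.inr () := by
  intro t
  induction t with
  | leaf =>
    intro R _ hbot heq
    have h := hbot [] trivial rfl
    rcases h with ⟨⟨b, _, hb⟩, _⟩
    rw [heq] at hb
    simp at hb
  | node l t1 t2 ih1 ih2 =>
    intro R hrun hbot heq
    have h0 := hrun [] l rfl
    rcases h0 with ⟨L, hl, htr, _⟩
    rw [heq] at htr
    have hs := A.sink_delta htr
    have hR1 : (fun π => R (false :: π)) [] = Sum.inr () := hs.1
    refine ih1 (fun π => R (false :: π)) (isRun_left _ hrun) ?_ hR1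
    intro π hm hla
    exact hbot (false :: π) hm hla

/-- Key determinacy of the root label type: any accepted node tree from state
`q0` determines, together with the root label, the selection status. -/
lemma root_sel (A : STA σ Q) (q0 : Q ⊕ Unit) {x : σ ⊕ σ}
    {t1 t2 : BTree (σ ⊕ σ)}
    (ht : BTree.node x t1 t2 ∈ (A.hat.restrict q0).lang) :
    ∃ p s, q0 = Sum.inl p ∧
      ((x = Sum.inl s ∧ (p, s) ∉ A.sel) ∨ (x = Sum.inr s ∧ (p, s) ∈ A.sel)) := by
  rcases ht with ⟨R, hrun, htop, hbot⟩
  have hR0 : R [] = q0 := htop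
  have h0 := hrun [] x rfl
  rcases h0 with ⟨L, hx, htr, _⟩
  rw [hR0] at htr
  have hsink : R [false] ≠ Sum.inr () := by
    intro hbad
    refine A.no_sink_run q0 t1 (fun π => R (false :: π))
      (isRun_left _ hrun) ?_ hbad
    intro π hm hla
    exact hbot (false :: π) hm hla
  rcases htr with (htr | htr) | htr
  · rcases htr with ⟨p, L0, p1, p2, hA, (⟨heq, _⟩ | ⟨heq, _⟩)⟩
    · simp only [Prod.ext_iff] at heq
      rcases heq with ⟨hq0, hL, _, _⟩
      rw [hL] at hx
      rcases hx with ⟨l, _, hnotsel, hxl⟩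
      exact ⟨p, l, hq0, Or.inl ⟨hxl, hnotsel⟩⟩
    · simp only [Prod.ext_iff] at heq
      rcases heq with ⟨hq0, hL, _, _⟩
      rw [hL] at hx
      rcases hx with ⟨l, _, hsel, hxl⟩
      exact ⟨p, l, hq0, Or.inr ⟨hxl, hsel⟩⟩
  · rcases htr with ⟨q', _, heq⟩
    simp only [Prod.ext_iff] at heq
    exact absurd heq.2.2.1 hsink
  · simp only [Set.mem_singleton_iff, Prod.ext_iff] at htr
    exact absurd htr.2.2.1 hsink

end STA

/-- the recognizer associated with a top-down complete TDSTA or a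
bottom-up complete BDSTA is selecting-unambiguous. -/
theorem stmt6 {σ Q : Type} [Finite σ] [Finite Q] (A : STA σ Q)
    (h : (A.TDDet ∧ A.TDComplete) ∨ (A.BUDet ∧ A.BUComplete)) :
    SelUnambiguous A.hat := by
  intro q t ht
  constructor
  · intro s hlab ht'
    cases t with
    | leaf => simp [BTree.labelAt] at hlab
    | node x t1 t2 =>
      have hx : x = Sum.inl s := by
        simpa [BTree.labelAt] using hlab
      subst hx
      obtain ⟨p, s', hq, hcase⟩ := A.root_sel q ht
      obtain ⟨p', s'', hq', hcase'⟩ := A.root_sel q ht'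
      rw [hq] at hq'
      have hp : p = p' := Sum.inl.inj hq'
      subst hp
      rcases hcase with ⟨hxs, hns⟩ | ⟨hxs, _⟩
      · have hs' : s' = s := Sum.inl.inj hxs.symm
        subst hs'
        rcases hcase' with ⟨hxs', _⟩ | ⟨hxs', hsel'⟩
        · exact Sum.inl_ne_inr hxs'.symm
        · have : s'' = s' := Sum.inr.inj hxs'.symm
          subst this
          exact hns hsel'
      · exact Sum.inl_ne_inr hxs
  · intro s hlab ht'
    cases t with
    | leaf => simp [BTree.labelAt] at hlab
    | node x t1 t2 =>
      have hx : x = Sum.inr s := by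
        simpa [BTree.labelAt] using hlab
      subst hx
      obtain ⟨p, s', hq, hcase⟩ := A.root_sel q ht
      obtain ⟨p', s'', hq', hcase'⟩ := A.root_sel q ht'
      rw [hq] at hq'
      have hp : p = p' := Sum.inl.inj hq'
      subst hp
      rcases hcase with ⟨hxs, _⟩ | ⟨hxs, hsel⟩
      · exact Sum.inl_ne_inr hxs.symm
      · have hs' : s' = s := Sum.inr.inj hxs.symm
        subst hs'
        rcases hcase' with ⟨hxs', hns'⟩ | ⟨hxs', _⟩
        · have : s'' = s' := Sum.inl.inj hxs'.symm
          subst this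
          exact hns' hsel
        · exact Sum.inl_ne_inr hxs'
end

section
/- Let A be a minimal top-down complete TDSTA over Σ. Then for all states q, q' of A: A[q] ≡ A[q'] if and only if q = q'. -/
section Aux

open BTree

variable {σ Q : Type}

/-- The canonical top-down run determined by a transition function `n`. -/
def runF (n : Q → σ → Q × Q) : BTree σ → Q → List Bool → Q
  | .leaf, p, _ => p
  | .node _ _ _, p, [] => p
  | .node l t1 _, p, false :: π => runF n t1 (n p l).1 π
  | .node l _ t2, p, true :: π => runF n t2 (n p l).2 π

/-- Acceptance from a state, determined by `n` and a bottom set. -/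
def AccF (bot : Set Q) (n : Q → σ → Q × Q) : BTree σ → Q → Prop
  | .leaf, p => p ∈ bot
  | .node l t1 t2, p => AccF bot n t1 (n p l).1 ∧ AccF bot n t2 (n p l).2

/-- Selection from a state. -/
def SelF (bot : Set Q) (sel : Set (Q × σ)) (n : Q → σ → Q × Q)
    (t : BTree σ) (p : Q) (π : List Bool) : Prop :=
  AccF bot n t p ∧ ∃ l, t.labelAt π = some l ∧ (runF n t p π, l) ∈ sel

lemma runF_nil (n : Q → σ → Q × Q) (t : BTree σ) (p : Q) : runF n t p [] = p := by
  cases t <;> rfl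

lemma mem_of_label {t : BTree σ} {π : List Bool} {l : σ}
    (h : t.labelAt π = some l) : BTree.mem π t := by
  induction t generalizing π with
  | leaf => simp [BTree.labelAt] at h
  | node l' t1 t2 ih1 ih2 =>
    cases π with
    | nil => trivial
    | cons b π => cases b
                  · exact ih1 h
                  · exact ih2 h

variable {A : STA σ Q} {n : Q → σ → Q × Q}

lemma n_mem (hn : ∀ p l, A.dst p l = {n p l}) (p : Q) (l : σ) :
    ∃ L, l ∈ L ∧ (p, L, (n p l).1, (n p l).2) ∈ A.delta := by
  have : n p l ∈ A.dst p l := by rw [hn]; rfl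
  exact this

lemma dst_eq (hn : ∀ p l, A.dst p l = {n p l}) {p : Q} {l : σ} {r : Q × Q}
    (h : r ∈ A.dst p l) : r = n p l := by rw [hn] at h; exact h

lemma step_n (hn : ∀ p l, A.dst p l = {n p l}) (p : Q) (l : σ) :
    A.step p (n p l).1 ∧ A.step p (n p l).2 := by
  obtain ⟨L, h1, h2⟩ := n_mem hn p l
  exact ⟨⟨L, _, _, h2, Or.inl rfl⟩, ⟨L, _, _, h2, Or.inr rfl⟩⟩

lemma reach_runF (hn : ∀ p l, A.dst p l = {n p l}) :
    ∀ (t : BTree σ) (p : Q) (π : List Bool), BTree.mem π t →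
      A.reach p (runF n t p π) := by
  intro t
  induction t with
  | leaf => intro p π _; cases π with
            | nil => exact Relation.ReflTransGen.refl
            | cons b π => exact Relation.ReflTransGen.refl
  | node l t1 t2 ih1 ih2 =>
    intro p π hm
    cases π with
    | nil => exact Relation.ReflTransGen.refl
    | cons b π =>
      cases b
      · exact Relation.ReflTransGen.head (step_n hn p l).1 (ih1 _ _ hm)
      · exact Relation.ReflTransGen.head (step_n hn p l).2 (ih2 _ _ hm)

lemma runF_append :
    ∀ (t : BTree σ) (p : Q) (π : List Bool) (l' : σ), t.labelAt π = some l' →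
      runF n t p (π ++ [false]) = (n (runF n t p π) l').1 ∧
      runF n t p (π ++ [true]) = (n (runF n t p π) l').2 := by
  intro t
  induction t with
  | leaf => intro p π l' h; simp [BTree.labelAt] at h
  | node l t1 t2 ih1 ih2 =>
    intro p π l' h
    cases π with
    | nil =>
      cases h
      exact ⟨runF_nil n t1 _, runF_nil n t2 _⟩
    | cons b π =>
      cases b
      · exact ih1 _ π l' h
      · exact ih2 _ π l' h

lemma isRun_restrict (hn : ∀ p l, A.dst p l = {n p l}) (p0 : Q) (t : BTree σ) :
    (A.restrict p0).IsRun t (runF n t p0) := by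
  intro π l' h
  obtain ⟨L, hlL, htr⟩ := n_mem hn (runF n t p0 π) l'
  obtain ⟨h1, h2⟩ := runF_append t p0 π l' h
  rw [h1, h2]
  exact ⟨L, hlL, htr, reach_runF hn t p0 π (mem_of_label h)⟩

lemma isRun_runF (hn : ∀ p l, A.dst p l = {n p l}) (t : BTree σ) (p : Q) :
    A.IsRun t (runF n t p) := by
  intro π l' h
  obtain ⟨L, hlL, htr⟩ := n_mem hn (runF n t p π) l'
  obtain ⟨h1, h2⟩ := runF_append t p π l' h
  rw [h1, h2]
  exact ⟨L, hlL, htr⟩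

lemma run_unique (hn : ∀ p l, A.dst p l = {n p l}) :
    ∀ (t : BTree σ) (R : List Bool → Q), A.IsRun t R →
      ∀ π, BTree.mem π t → R π = runF n t (R []) π := by
  intro t
  induction t with
  | leaf =>
    intro R _ π hπ
    cases π with
    | nil => rfl
    | cons b π => cases b <;> exact False.elim hπ
  | node l t1 t2 ih1 ih2 =>
    intro R hR π hπ
    have h0 := hR [] l rfl
    have hd : (R [false], R [true]) ∈ A.dst (R []) l := by
      obtain ⟨L, h1, h2⟩ := h0; exact ⟨L, h1, h2⟩
    have hd' := dst_eq hn hd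
    cases π with
    | nil => rfl
    | cons b ρ =>
      cases b
      · have hrun1 : A.IsRun t1 (fun π => R (false :: π)) := by
          intro π' l' h'; exact hR (false :: π') l' h'
        have := ih1 _ hrun1 ρ hπ
        show R (false :: ρ) = runF n t1 (n (R []) l).1 ρ
        rw [← congrArg Prod.fst hd']
        exact this
      · have hrun2 : A.IsRun t2 (fun π => R (true :: π)) := by
          intro π' l' h'; exact hR (true :: π') l' h'
        have := ih2 _ hrun2 ρ hπ
        show R (true :: ρ) = runF n t2 (n (R []) l).2 ρ
        rw [← congrArg Prod.snd hd']
        exact this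

lemma AccF_iff (bot : Set Q) :
    ∀ (t : BTree σ) (p : Q), AccF bot n t p ↔
      ∀ π, BTree.mem π t → t.labelAt π = none → runF n t p π ∈ bot := by
  intro t
  induction t with
  | leaf =>
    intro p
    constructor
    · intro h π hm _
      cases π with
      | nil => exact h
      | cons b π => cases b <;> exact False.elim hm
    · intro h; exact h [] trivial rfl
  | node l t1 t2 ih1 ih2 =>
    intro p
    constructor
    · rintro ⟨h1, h2⟩ π hm hl
      cases π with
      | nil => simp [BTree.labelAt] at hl
      | cons b ρ =>
        cases b
        · exact (ih1 _).1 h1 ρ hm hl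
        · exact (ih2 _).1 h2 ρ hm hl
    · intro h
      exact ⟨(ih1 _).2 (fun ρ hm hl => h (false :: ρ) hm hl),
             (ih2 _).2 (fun ρ hm hl => h (true :: ρ) hm hl)⟩

lemma accepting_restrict (hn : ∀ p l, A.dst p l = {n p l}) {p0 : Q} {t : BTree σ}
    {R : List Bool → Q} (h : (A.restrict p0).Accepting t R) :
    AccF A.bot n t p0 ∧ ∀ π, BTree.mem π t → R π = runF n t p0 π := by
  obtain ⟨hR, htop, hbot⟩ := h
  have hR' : A.IsRun t R := by
    intro π l h; obtain ⟨L, h1, h2⟩ := hR π l h; exact ⟨L, h1, h2.1⟩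
  have h0 : R [] = p0 := htop
  have huniq : ∀ π, BTree.mem π t → R π = runF n t p0 π := by
    intro π hm; rw [← h0]; exact run_unique hn t R hR' π hm
  refine ⟨(AccF_iff A.bot t p0).2 ?_, huniq⟩
  intro π hm hl
  have := hbot π hm hl
  rw [huniq π hm] at this
  exact this.1

lemma accF_accepting (hn : ∀ p l, A.dst p l = {n p l}) {p0 : Q} {t : BTree σ}
    (h : AccF A.bot n t p0) : (A.restrict p0).Accepting t (runF n t p0) := by
  refine ⟨isRun_restrict hn p0 t, ?_, ?_⟩
  · show runF n t p0 [] ∈ ({p0} : Set Q)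
    rw [runF_nil]; rfl
  · intro π hm hl
    exact ⟨(AccF_iff A.bot t p0).1 h π hm hl, reach_runF hn t p0 π hm⟩

lemma lang_restrict (hn : ∀ p l, A.dst p l = {n p l}) (p0 : Q) :
    (A.restrict p0).lang = {t | AccF A.bot n t p0} := by
  ext t
  constructor
  · rintro ⟨R, hR⟩
    exact (accepting_restrict hn hR).1
  · intro h
    exact ⟨runF n t p0, accF_accepting hn h⟩

lemma selected_restrict (hn : ∀ p l, A.dst p l = {n p l}) (p0 : Q) (t : BTree σ) :
    (A.restrict p0).selected t = {π | SelF A.bot A.sel n t p0 π} := by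
  ext π
  constructor
  · rintro ⟨R, l, hacc, hlab, hsel⟩
    obtain ⟨hA, huniq⟩ := accepting_restrict hn hacc
    refine ⟨hA, l, hlab, ?_⟩
    rw [← huniq π (mem_of_label hlab)]
    exact hsel.1
  · rintro ⟨hA, l, hlab, hsel⟩
    exact ⟨runF n t p0, l, accF_accepting hn hA, hlab,
      hsel, reach_runF hn t p0 π (mem_of_label hlab)⟩

lemma accepting_top (hn : ∀ p l, A.dst p l = {n p l}) {t0 : Q}
    (htop : A.top = {t0}) {t : BTree σ}
    {R : List Bool → Q} (h : A.Accepting t R) :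
    AccF A.bot n t t0 ∧ ∀ π, BTree.mem π t → R π = runF n t t0 π := by
  obtain ⟨hR, htR, hbot⟩ := h
  have h0 : R [] = t0 := by rw [htop] at htR; exact htR
  have huniq : ∀ π, BTree.mem π t → R π = runF n t t0 π := by
    intro π hm; rw [← h0]; exact run_unique hn t R hR π hm
  refine ⟨(AccF_iff A.bot t t0).2 ?_, huniq⟩
  intro π hm hl
  have := hbot π hm hl
  rw [huniq π hm] at this
  exact this

lemma accF_accepting_top (hn : ∀ p l, A.dst p l = {n p l}) {t0 : Q}
    (htop : A.top = {t0}) {t : BTree σ}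
    (h : AccF A.bot n t t0) : A.Accepting t (runF n t t0) := by
  refine ⟨isRun_runF hn t t0, ?_, ?_⟩
  · rw [htop]; show runF n t t0 [] ∈ ({t0} : Set Q); rw [runF_nil]; rfl
  · intro π hm hl
    exact (AccF_iff A.bot t t0).1 h π hm hl

lemma lang_top (hn : ∀ p l, A.dst p l = {n p l}) {t0 : Q} (htop : A.top = {t0}) :
    A.lang = {t | AccF A.bot n t t0} := by
  ext t
  constructor
  · rintro ⟨R, hR⟩
    exact (accepting_top hn htop hR).1
  · intro h
    exact ⟨runF n t t0, accF_accepting_top hn htop h⟩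

lemma selected_top (hn : ∀ p l, A.dst p l = {n p l}) {t0 : Q} (htop : A.top = {t0})
    (t : BTree σ) :
    A.selected t = {π | SelF A.bot A.sel n t t0 π} := by
  ext π
  constructor
  · rintro ⟨R, l, hacc, hlab, hsel⟩
    obtain ⟨hA, huniq⟩ := accepting_top hn htop hacc
    refine ⟨hA, l, hlab, ?_⟩
    rw [← huniq π (mem_of_label hlab)]
    exact hsel
  · rintro ⟨hA, l, hlab, hsel⟩
    exact ⟨runF n t t0, l, accF_accepting_top hn htop hA, hlab, hsel⟩

end Aux

section Merge

open BTree Classical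

variable {σ Q : Type}

/-- The merged automaton: states `{p // p ≠ q'}`, with `q'` redirected to `q`. -/
noncomputable def mergeF (q q' : Q) (hne : q ≠ q') (p : Q) : {p : Q // p ≠ q'} :=
  if h : p = q' then ⟨q, hne⟩ else ⟨p, h⟩

noncomputable def mergeSTA (A : STA σ Q) (q q' : Q) (hne : q ≠ q') (t0 : Q) :
    STA σ {p : Q // p ≠ q'} where
  top := {mergeF q q' hne t0}
  bot := {p | p.val ∈ A.bot}
  sel := {x | (x.1.val, x.2) ∈ A.sel}
  delta := {x | ∃ r1 r2, (x.1.val, x.2.1, r1, r2) ∈ A.delta ∧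
    x.2.2.1 = mergeF q q' hne r1 ∧ x.2.2.2 = mergeF q q' hne r2}

lemma mergeF_val {q q' : Q} {hne : q ≠ q'} {p : Q} (h : p ≠ q') :
    (mergeF q q' hne p).val = p := by unfold mergeF; rw [dif_neg h]

lemma mergeF_q' {q q' : Q} {hne : q ≠ q'} : mergeF q q' hne q' = mergeF q q' hne q := by
  unfold mergeF; rw [dif_pos rfl, dif_neg hne]

lemma mergeF_val_q' {q q' : Q} {hne : q ≠ q'} {p : Q} (h : p = q') :
    (mergeF q q' hne p).val = q := by rw [h]; unfold mergeF; rw [dif_pos rfl]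

/-- The merged transition function. -/
noncomputable def mergeN (n : Q → σ → Q × Q) (q q' : Q) (hne : q ≠ q') :
    {p : Q // p ≠ q'} → σ → {p : Q // p ≠ q'} × {p : Q // p ≠ q'} :=
  fun p l => (mergeF q q' hne (n p.val l).1, mergeF q q' hne (n p.val l).2)

lemma mergeN_fst {n : Q → σ → Q × Q} {q q' : Q} {hne : q ≠ q'}
    (p : {p : Q // p ≠ q'}) (l : σ) :
    (mergeN n q q' hne p l).1 = mergeF q q' hne (n p.val l).1 := rfl

lemma mergeN_snd {n : Q → σ → Q × Q} {q q' : Q} {hne : q ≠ q'}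
    (p : {p : Q // p ≠ q'}) (l : σ) :
    (mergeN n q q' hne p l).2 = mergeF q q' hne (n p.val l).2 := rfl

variable {A : STA σ Q} {n : Q → σ → Q × Q}

lemma merge_dst (hn : ∀ p l, A.dst p l = {n p l}) (q q' : Q) (hne : q ≠ q') (t0 : Q) :
    ∀ (p : {p : Q // p ≠ q'}) (l : σ),
      (mergeSTA A q q' hne t0).dst p l = {mergeN n q q' hne p l} := by
  intro p l
  ext y
  constructor
  · rintro ⟨L, hlL, r1, r2, htr, h1, h2⟩
    have : (r1, r2) ∈ A.dst p.val l := ⟨L, hlL, htr⟩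
    have heq := dst_eq hn this
    have e1 : r1 = (n p.val l).1 := congrArg Prod.fst heq
    have e2 : r2 = (n p.val l).2 := congrArg Prod.snd heq
    show y = _
    rw [Prod.ext_iff]
    exact ⟨by rw [h1, e1]; rfl, by rw [h2, e2]; rfl⟩
  · intro hy
    obtain ⟨L, hlL, htr⟩ := n_mem hn p.val l
    refine ⟨L, hlL, (n p.val l).1, (n p.val l).2, htr, ?_, ?_⟩
    · exact congrArg Prod.fst hy
    · exact congrArg Prod.snd hy

end Merge

section Main

open BTree

variable {σ Q : Type}

theorem merge_AccF {A : STA σ Q} {n : Q → σ → Q × Q} {q q' : Q} (hne : q ≠ q') (t0 : Q)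
    (hq : ∀ t, AccF A.bot n t q ↔ AccF A.bot n t q') :
    ∀ (t : BTree σ) (p : Q),
      AccF (mergeSTA A q q' hne t0).bot (mergeN n q q' hne) t (mergeF q q' hne p)
      ↔ AccF A.bot n t p := by
  intro t
  induction t with
  | leaf =>
    intro p
    show (mergeF q q' hne p).val ∈ A.bot ↔ p ∈ A.bot
    by_cases h : p = q'
    · rw [mergeF_val_q' h, h]
      simpa [AccF] using hq BTree.leaf
    · rw [mergeF_val h]
  | node l t1 t2 ih1 ih2 =>
    intro p
    show (AccF _ _ t1 (mergeF q q' hne (n (mergeF q q' hne p).val l).1) ∧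
          AccF _ _ t2 (mergeF q q' hne (n (mergeF q q' hne p).val l).2)) ↔ _
    have key : ∀ (r : Q),
        (AccF (mergeSTA A q q' hne t0).bot (mergeN n q q' hne)
            t1 (mergeF q q' hne (n r l).1) ∧
         AccF (mergeSTA A q q' hne t0).bot (mergeN n q q' hne)
            t2 (mergeF q q' hne (n r l).2)) ↔
        AccF A.bot n (BTree.node l t1 t2) r := by
      intro r
      rw [ih1, ih2]
      exact Iff.rfl
    by_cases h : p = q'
    · rw [mergeF_val_q' h]
      exact (key q).trans (by rw [h]; exact hq _)
    · rw [mergeF_val h]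
      exact key p

theorem merge_SelF {A : STA σ Q} {n : Q → σ → Q × Q} {q q' : Q} (hne : q ≠ q') (t0 : Q)
    (hq : ∀ t, AccF A.bot n t q ↔ AccF A.bot n t q')
    (hs : ∀ t π, SelF A.bot A.sel n t q π ↔ SelF A.bot A.sel n t q' π) :
    ∀ (t : BTree σ) (π : List Bool) (p : Q),
      SelF (mergeSTA A q q' hne t0).bot (mergeSTA A q q' hne t0).sel
        (mergeN n q q' hne) t (mergeF q q' hne p) π
      ↔ SelF A.bot A.sel n t p π := by
  intro t
  induction t with
  | leaf =>
    intro π p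
    constructor <;> (rintro ⟨_, l, hl, _⟩; simp [BTree.labelAt] at hl)
  | node l t1 t2 ih1 ih2 =>
    intro π p
    have key : ∀ (r : Q), r ≠ q' →
        (SelF (mergeSTA A q q' hne t0).bot (mergeSTA A q q' hne t0).sel
          (mergeN n q q' hne) (BTree.node l t1 t2) (mergeF q q' hne r) π
        ↔ SelF A.bot A.sel n (BTree.node l t1 t2) r π) := by
      intro r hr
      have hval : (mergeF q q' hne r).val = r := mergeF_val hr
      cases π with
      | nil =>
        constructor
        · rintro ⟨ha, l0, hl0, hsel⟩
          refine ⟨(merge_AccF hne t0 hq _ r).1 ha, l0, hl0, ?_⟩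
          have h2 : ((mergeF q q' hne r).val, l0) ∈ A.sel := hsel
          rwa [hval] at h2
        · rintro ⟨ha, l0, hl0, hsel⟩
          refine ⟨(merge_AccF hne t0 hq _ r).2 ha, l0, hl0, ?_⟩
          show ((mergeF q q' hne r).val, l0) ∈ A.sel
          rw [hval]; exact hsel
      | cons b ρ =>
        cases b
        · simp only [SelF, AccF, runF, mergeN_fst, mergeN_snd, hval, BTree.labelAt]
          have hIH := ih1 ρ (n r l).1
          simp only [SelF] at hIH
          have hA2 := merge_AccF hne t0 hq t2 (n r l).2
          constructor
          · rintro ⟨⟨ha, hb⟩, hx⟩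
            obtain ⟨ha', hx'⟩ := hIH.1 ⟨ha, hx⟩
            exact ⟨⟨ha', hA2.1 hb⟩, hx'⟩
          · rintro ⟨⟨ha, hb⟩, hx⟩
            obtain ⟨ha', hx'⟩ := hIH.2 ⟨ha, hx⟩
            exact ⟨⟨ha', hA2.2 hb⟩, hx'⟩
        · simp only [SelF, AccF, runF, mergeN_fst, mergeN_snd, hval, BTree.labelAt]
          have hIH := ih2 ρ (n r l).2
          simp only [SelF] at hIH
          have hA1 := merge_AccF hne t0 hq t1 (n r l).1
          constructor
          · rintro ⟨⟨ha, hb⟩, hx⟩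
            obtain ⟨hb', hx'⟩ := hIH.1 ⟨hb, hx⟩
            exact ⟨⟨hA1.1 ha, hb'⟩, hx'⟩
          · rintro ⟨⟨ha, hb⟩, hx⟩
            obtain ⟨hb', hx'⟩ := hIH.2 ⟨hb, hx⟩
            exact ⟨⟨hA1.2 ha, hb'⟩, hx'⟩
    by_cases h : p = q'
    · rw [show mergeF q q' hne p = mergeF q q' hne q from by rw [h]; exact mergeF_q']
      exact (key q hne).trans (by rw [h]; exact hs _ _)
    · exact key p h

end Main

/-- in a minimal top-down complete TDSTA, sub-automata are
equivalent iff their start states are equal. -/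
theorem stmt10 {σ Q : Type} [Finite σ] [Finite Q] (A : STA σ Q)
    (hmin : MinimalTD A) :
    ∀ q q' : Q, STAEquiv (A.restrict q) (A.restrict q') ↔ q = q' := by
  classical
  obtain ⟨hdet, hcomp, hmin3⟩ := hmin
  obtain ⟨t0, htop⟩ := hdet.1
  have hn : ∀ p l, A.dst p l = {(fun p l => (hdet.2 p l).choose) p l} :=
    fun p l => (hdet.2 p l).choose_spec
  set n : Q → σ → Q × Q := fun p l => (hdet.2 p l).choose with hn_def
  intro q q'
  constructor
  · intro hequiv
    by_contra hne
    have hq : ∀ t, AccF A.bot n t q ↔ AccF A.bot n t q' := by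
      intro t
      have h1 := hequiv.1
      rw [lang_restrict hn q, lang_restrict hn q'] at h1
      exact Set.ext_iff.1 h1 t
    have hs : ∀ t π, SelF A.bot A.sel n t q π ↔ SelF A.bot A.sel n t q' π := by
      intro t π
      have h2 := hequiv.2 t
      rw [selected_restrict hn q t, selected_restrict hn q' t] at h2
      exact Set.ext_iff.1 h2 π
    have hne' : q ≠ q' := hne
    set B := mergeSTA A q q' hne' t0 with hB
    set nB := mergeN n q q' hne' with hnB_def
    have hnB : ∀ p l, B.dst p l = {nB p l} := merge_dst hn q q' hne' t0
    have hBtop : B.top = {mergeF q q' hne' t0} := rfl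
    have hBdet : B.TDDet := ⟨⟨mergeF q q' hne' t0, rfl⟩, fun p l => ⟨nB p l, hnB p l⟩⟩
    have hBcomp : B.TDComplete := fun p l => by rw [hnB]; exact ⟨nB p l, rfl⟩
    have hlang : B.lang = A.lang := by
      rw [lang_top hnB hBtop, lang_top hn htop]
      ext t
      exact merge_AccF hne' t0 hq t t0
    have hsel : ∀ t, B.selected t = A.selected t := by
      intro t
      rw [selected_top hnB hBtop t, selected_top hn htop t]
      ext π
      exact merge_SelF hne' t0 hq hs t π t0
    have hcard := hmin3 {p : Q // p ≠ q'} B hBdet hBcomp ⟨hlang, hsel⟩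
    haveI : Fintype Q := Fintype.ofFinite Q
    have hlt : Nat.card {p : Q // p ≠ q'} < Nat.card Q := by
      rw [Nat.card_eq_fintype_card, Nat.card_eq_fintype_card]
      exact Fintype.card_subtype_lt (x := q') (by simp)
    exact absurd hcard (not_le.2 hlt)
  · rintro rfl
    exact ⟨rfl, fun t => rfl⟩
end

section
/- Let t ∈ T(Σ), π ∈ dom(t), and L ⊆ Σ. Call a node π' an L-topmost descendant of π if π' is a descendant of π, t(π') ∈ L, and no node π'' that is simultaneously a descendant of π and a proper ancestor of π' has t(π'') ∈ L. Define π₀ = d_t(π, L) and π_{k+1} = f_t(π_k, L, π) for as long as π_k ≠ Ω. Then the (finite, possibly empty) sequence of non-Ω nodes π₀, π₁, …, π_n produced this way enumerates exactly the set of L-topmost descendants of π, in strictly increasing document order. -/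
/-- `a` is a proper prefix of `b` (i.e. `b` is a descendant of `a`). -/
def ProperPrefix (a b : List Bool) : Prop := a <+: b ∧ a ≠ b

/-- `b` is a descendant of `a`. -/
def Descendant (a b : List Bool) : Prop := ProperPrefix a b

/-- Strict document (pre-)order on nodes. -/
def docLt (a b : List Bool) : Prop :=
  ProperPrefix a b ∨ ∃ ρ s s', a = ρ ++ false :: s ∧ b = ρ ++ true :: s'

/-- `b` is a following of `a`. -/
def Following (a b : List Bool) : Prop := docLt a b ∧ ¬ Descendant a b

open Classical in
/-- The least element of a set of nodes w.r.t. document order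
(`none` plays the role of `Ω`). -/
noncomputable def leastDoc (s : Set (List Bool)) : Option (List Bool) :=
  if h : ∃ x ∈ s, ∀ y ∈ s, y = x ∨ docLt x y then some h.choose else none

/-- `d_t(π, L)` : the first descendant of `π` (in document order) whose label
is in `L`, or `Ω`. -/
noncomputable def dJump {σ : Type} (t : BTree σ) (π : List Bool) (L : Set σ) :
    Option (List Bool) :=
  leastDoc {x | Descendant π x ∧ ∃ l ∈ L, t.labelAt x = some l}

/-- `f_t(p, L, π₀)` : the first following of `p` that is a descendant of `π₀`
and whose label is in `L`, or `Ω`. -/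
noncomputable def fJump {σ : Type} (t : BTree σ) (p : List Bool) (L : Set σ)
    (π0 : List Bool) : Option (List Bool) :=
  leastDoc {x | Following p x ∧ Descendant π0 x ∧ ∃ l ∈ L, t.labelAt x = some l}

/-- The sequence `π₀ = d_t(π,L)`, `π_{k+1} = f_t(π_k, L, π)`, stopping (with
`none` = `Ω`) as soon as a jump fails. -/
noncomputable def jumpSeq {σ : Type} (t : BTree σ) (π : List Bool) (L : Set σ) :
    ℕ → Option (List Bool)
  | 0 => dJump t π L
  | k + 1 =>
    match jumpSeq t π L k with
    | none => none
    | some p => fJump t p L π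

/-- The set of `L`-topmost descendants of `π` in `t`. -/
def topmostSet {σ : Type} (t : BTree σ) (π : List Bool) (L : Set σ) :
    Set (List Bool) :=
  {x | Descendant π x ∧ (∃ l ∈ L, t.labelAt x = some l) ∧
    ¬ ∃ y, Descendant π y ∧ ProperPrefix y x ∧ ∃ l ∈ L, t.labelAt y = some l}


/-! ### Auxiliary lemmas for stmt15 -/

section Stmt15Aux

lemma docLt_def {a b : List Bool} : docLt a b ↔
    (a <+: b ∧ a ≠ b) ∨ ∃ ρ s s', a = ρ ++ false :: s ∧ b = ρ ++ true :: s' :=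
  Iff.rfl

lemma lex_append {a c : List Bool} (hc : c ≠ []) : List.Lex (· < ·) a (a ++ c) := by
  induction a with
  | nil =>
    cases c with
    | nil => exact absurd rfl hc
    | cons x xs => exact List.Lex.nil
  | cons x xs ih => exact List.Lex.cons ih

lemma docLt_iff {a b : List Bool} : docLt a b ↔ a < b := by
  show _ ↔ List.Lex (· < ·) a b
  constructor
  · intro h
    rcases docLt_def.mp h with ⟨⟨c, rfl⟩, hne⟩ | ⟨ρ, s, s', rfl, rfl⟩
    · exact lex_append (fun h => hne (by simp [h]))
    · clear h
      induction ρ with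
      | nil => exact List.Lex.rel (by decide)
      | cons x xs ih => exact List.Lex.cons ih
  · intro h
    induction h with
    | nil => exact docLt_def.mpr (Or.inl ⟨⟨_, rfl⟩, by simp⟩)
    | @cons a as bs h ih =>
      rcases docLt_def.mp ih with ⟨⟨c, rfl⟩, hne⟩ | ⟨ρ, s, s', rfl, rfl⟩
      · exact docLt_def.mpr (Or.inl ⟨⟨c, rfl⟩, fun h2 => hne (by injection h2)⟩)
      · exact docLt_def.mpr (Or.inr ⟨a :: ρ, s, s', rfl, rfl⟩)
    | @rel a as b bs h =>
      obtain ⟨rfl, rfl⟩ : a = false ∧ b = true := by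
        revert h; cases a <;> cases b <;> decide
      exact docLt_def.mpr (Or.inr ⟨[], as, bs, rfl, rfl⟩)

lemma docLt_asymm {a b : List Bool} (h : docLt a b) (h2 : docLt b a) : False :=
  absurd (docLt_iff.mp h) (not_lt_of_gt (docLt_iff.mp h2))

lemma properPrefix_docLt {a b : List Bool} (h : ProperPrefix a b) : docLt a b :=
  docLt_def.mpr (Or.inl h)

lemma docLt_trichotomy (a b : List Bool) : a = b ∨ docLt a b ∨ docLt b a := by
  rcases lt_trichotomy a b with h | h | h
  · exact Or.inr (Or.inl (docLt_iff.mpr h))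
  · exact Or.inl h
  · exact Or.inr (Or.inr (docLt_iff.mpr h))

lemma leastDoc_eq_some {s : Set (List Bool)} {x : List Bool}
    (h : leastDoc s = some x) : x ∈ s ∧ ∀ y ∈ s, y = x ∨ docLt x y := by
  unfold leastDoc at h
  split at h
  · next he =>
    obtain rfl : he.choose = x := by injection h
    exact he.choose_spec
  · exact absurd h (by simp)

lemma leastDoc_isSome {s : Set (List Bool)} (hf : s.Finite) (hn : s.Nonempty) :
    ∃ x, leastDoc s = some x := by
  have hex : ∃ x ∈ s, ∀ y ∈ s, y = x ∨ docLt x y := by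
    obtain ⟨a, ha, hmin⟩ := Set.exists_min_image s id hf hn
    refine ⟨a, ha, fun y hy => ?_⟩
    rcases eq_or_lt_of_le (hmin y hy) with h | h
    · exact Or.inl h.symm
    · exact Or.inr (docLt_iff.mpr h)
  unfold leastDoc
  rw [dif_pos hex]
  exact ⟨_, rfl⟩

lemma labels_finite {σ : Type} (t : BTree σ) :
    {x : List Bool | ∃ l, t.labelAt x = some l}.Finite := by
  induction t with
  | leaf =>
    convert Set.finite_empty
    ext x
    simp [BTree.labelAt]
  | node l t1 t2 ih1 ih2 =>
    apply Set.Finite.subset (((ih1.image (List.cons false)).union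
      (ih2.image (List.cons true))).insert ([] : List Bool))
    rintro x ⟨l', hx⟩
    match x with
    | [] => exact Set.mem_insert _ _
    | false :: p => exact Set.mem_insert_of_mem _ (Or.inl ⟨p, ⟨l', hx⟩, rfl⟩)
    | true :: p => exact Set.mem_insert_of_mem _ (Or.inr ⟨p, ⟨l', hx⟩, rfl⟩)

variable {σ : Type} {t : BTree σ} {π : List Bool} {L : Set σ}

lemma Dset_finite :
    {x | Descendant π x ∧ ∃ l ∈ L, t.labelAt x = some l}.Finite :=
  (labels_finite t).subset (by rintro x ⟨_, l, _, h⟩; exact ⟨l, h⟩)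

lemma Fset_finite {p : List Bool} :
    {x | Following p x ∧ Descendant π x ∧ ∃ l ∈ L, t.labelAt x = some l}.Finite :=
  (labels_finite t).subset (by rintro x ⟨_, _, l, _, h⟩; exact ⟨l, h⟩)

lemma topmost_finite : (topmostSet t π L).Finite :=
  (labels_finite t).subset (by rintro x ⟨_, ⟨l, _, h⟩, _⟩; exact ⟨l, h⟩)

lemma dJump_mem_topmost {x : List Bool} (h : dJump t π L = some x) :
    x ∈ topmostSet t π L := by
  obtain ⟨⟨hxd, hxl⟩, hleast⟩ := leastDoc_eq_some h
  refine ⟨hxd, hxl, ?_⟩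
  rintro ⟨y, hyπ, hyx, hyl⟩
  rcases hleast y ⟨hyπ, hyl⟩ with rfl | hlt
  · exact hyx.2 rfl
  · exact docLt_asymm hlt (properPrefix_docLt hyx)

lemma fJump_mem_topmost {p x : List Bool} (hp : p ∈ topmostSet t π L)
    (h : fJump t p L π = some x) : x ∈ topmostSet t π L := by
  obtain ⟨⟨hxf, hxd, hxl⟩, hleast⟩ := leastDoc_eq_some h
  obtain ⟨hpπ, hpl, hpno⟩ := hp
  refine ⟨hxd, hxl, ?_⟩
  rintro ⟨y, hyπ, hyx, hyl⟩
  rcases docLt_trichotomy y p with rfl | hyp | hpy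
  · exact hxf.2 hyx
  · rcases docLt_def.mp hyp with hpre | ⟨ρ, s, s', hy, hpp⟩
    · exact hpno ⟨y, hyπ, hpre, hyl⟩
    · obtain ⟨u, hu⟩ := hyx.1
      have hxlt : docLt x p := by
        refine docLt_def.mpr (Or.inr ⟨ρ, s ++ u, s', ?_, hpp⟩)
        rw [← hu, hy]; simp
      exact docLt_asymm hxlt hxf.1
  · have hnd : ¬ Descendant p y := by
      rintro ⟨hpre, hne⟩
      have hpx : p <+: x := hpre.trans hyx.1
      have hpnex : p ≠ x := by
        rintro rfl
        exact hyx.2 (hyx.1.eq_of_length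
          (le_antisymm hyx.1.length_le hpre.length_le))
      exact hxf.2 ⟨hpx, hpnex⟩
    rcases hleast y ⟨⟨hpy, hnd⟩, hyπ, hyl⟩ with rfl | hlt
    · exact hyx.2 rfl
    · exact docLt_asymm hlt (properPrefix_docLt hyx)

lemma jumpSeq_succ_none {k : ℕ} (h : jumpSeq t π L k = none) :
    jumpSeq t π L (k + 1) = none := by
  simp [jumpSeq, h]

lemma jumpSeq_succ_some {k : ℕ} {p : List Bool} (h : jumpSeq t π L k = some p) :
    jumpSeq t π L (k + 1) = fJump t p L π := by
  simp [jumpSeq, h]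

lemma jumpSeq_zero : jumpSeq t π L 0 = dJump t π L := rfl

lemma jumpSeq_mem_topmost {k : ℕ} {x : List Bool}
    (h : jumpSeq t π L k = some x) : x ∈ topmostSet t π L := by
  induction k generalizing x with
  | zero => exact dJump_mem_topmost h
  | succ k ih =>
    cases hk : jumpSeq t π L k with
    | none => rw [jumpSeq_succ_none hk] at h; exact absurd h (by simp)
    | some p =>
      rw [jumpSeq_succ_some hk] at h
      exact fJump_mem_topmost (ih hk) h

lemma topmost_reached {x : List Bool} (hx : x ∈ topmostSet t π L) :
    ∃ k, jumpSeq t π L k = some x := by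
  classical
  set Tf : Finset (List Bool) := topmost_finite (t := t) (π := π) (L := L).toFinset with hTf
  suffices H : ∀ n x, x ∈ topmostSet t π L →
      (Tf.filter (fun q => q < x)).card = n → ∃ k, jumpSeq t π L k = some x by
    exact H _ x hx rfl
  intro n
  induction n using Nat.strong_induction_on with
  | _ n ih =>
    intro x hx hn
    rcases Finset.eq_empty_or_nonempty (Tf.filter (fun q => q < x)) with hemp | hne
    · -- x is the least topmost element; dJump finds it
      have hxD : x ∈ {z | Descendant π z ∧ ∃ l ∈ L, t.labelAt z = some l} :=
        ⟨hx.1, hx.2.1⟩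
      obtain ⟨z, hz⟩ := leastDoc_isSome Dset_finite ⟨x, hxD⟩
      have hztop := dJump_mem_topmost (t := t) (π := π) (L := L) hz
      obtain ⟨-, hleast⟩ := leastDoc_eq_some hz
      rcases hleast x hxD with rfl | hlt
      · exact ⟨0, hz⟩
      · exfalso
        have : z ∈ Tf.filter (fun q => q < x) := by
          simp only [Finset.mem_filter, hTf, Set.Finite.mem_toFinset]
          exact ⟨hztop, docLt_iff.mp hlt⟩
        rw [hemp] at this
        exact absurd this (by simp)
    · obtain ⟨p, hpmem, hpmax⟩ := Finset.exists_max_image _ id hne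
      have hpfilter := Finset.mem_filter.mp hpmem
      have hptop : p ∈ topmostSet t π L := by
        have := hpfilter.1
        rwa [hTf, Set.Finite.mem_toFinset] at this
      have hplt : p < x := hpfilter.2
      have hcard : (Tf.filter (fun q => q < p)).card < n := by
        have hsub : Tf.filter (fun q => q < p) ⊆ (Tf.filter (fun q => q < x)).erase p := by
          intro q hq
          have hq' := Finset.mem_filter.mp hq
          refine Finset.mem_erase.mpr ⟨fun h => ?_, Finset.mem_filter.mpr
            ⟨hq'.1, hq'.2.trans hplt⟩⟩
          exact absurd hq'.2 (by rw [h]; exact lt_irrefl p)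
        calc (Tf.filter (fun q => q < p)).card
            ≤ ((Tf.filter (fun q => q < x)).erase p).card := Finset.card_le_card hsub
          _ < n := by rw [← hn]; exact Finset.card_erase_lt_of_mem hpmem
      obtain ⟨k, hk⟩ := ih _ hcard p hptop rfl
      -- x belongs to the f-jump set from p
      have hxF : x ∈ {z | Following p z ∧ Descendant π z ∧
          ∃ l ∈ L, t.labelAt z = some l} := by
        refine ⟨⟨docLt_iff.mpr hplt, ?_⟩, hx.1, hx.2.1⟩
        intro hd
        exact hx.2.2 ⟨p, hptop.1, hd, hptop.2.1⟩
      obtain ⟨z, hz⟩ := leastDoc_isSome Fset_finite ⟨x, hxF⟩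
      have hztop := fJump_mem_topmost hptop hz
      obtain ⟨hzF, hleast⟩ := leastDoc_eq_some hz
      rcases hleast x hxF with rfl | hlt
      · exact ⟨k + 1, by rw [jumpSeq_succ_some hk]; exact hz⟩
      · exfalso
        have hzfilter : z ∈ Tf.filter (fun q => q < x) := by
          simp only [Finset.mem_filter, hTf, Set.Finite.mem_toFinset]
          exact ⟨hztop, docLt_iff.mp hlt⟩
        have hzp : z ≤ p := hpmax z hzfilter
        have hpz : p < z := docLt_iff.mp hzF.1.1
        exact absurd hzp (not_le_of_gt hpz)

end Stmt15Aux

/-- the `d`/`f` jump iteration enumerates exactly the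
`L`-topmost descendants of `π`, in strictly increasing document order, and
terminates. -/
theorem stmt15 {σ : Type} [Finite σ] (t : BTree σ) (π : List Bool)
    (hπ : BTree.mem π t) (L : Set σ) :
    (∀ x, x ∈ topmostSet t π L ↔ ∃ k, jumpSeq t π L k = some x) ∧
    (∀ k p p', jumpSeq t π L k = some p → jumpSeq t π L (k + 1) = some p' →
      docLt p p') ∧
    (∃ n, jumpSeq t π L n = none) :=  by
  constructor
  · intro x
    constructor
    · exact topmost_reached
    · rintro ⟨k, hk⟩
      exact jumpSeq_mem_topmost hk
  constructor
  · intro k p p' h h'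
    rw [jumpSeq_succ_some h] at h'
    exact (leastDoc_eq_some h').1.1.1
  · by_contra hno
    push_neg at hno
    have hsome : ∀ n, ∃ p, jumpSeq t π L n = some p :=
      fun n => Option.ne_none_iff_exists'.mp (hno n)
    choose f hf using hsome
    have hmono : StrictMono f := by
      apply strictMono_nat_of_lt_succ
      intro n
      have h2 := hf (n + 1)
      rw [jumpSeq_succ_some (hf n)] at h2
      exact docLt_iff.mp (leastDoc_eq_some h2).1.1.1
    exact Set.infinite_of_injective_forall_mem hmono.injective
      (fun n => jumpSeq_mem_topmost (hf n)) topmost_finite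
end
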